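/- Let e : (0,∞) → ℝ be a continuously differentiable Synge-type EOS. Let T > 0 and let ρ, v, p : ℝ × (0,T) → ℝ be continuously differentiable functions with ρ(x,t) > 0, p(x,t) > 0, |v(x,t)| < 1 for all (x,t), satisfying the one-dimensional relativistic Euler equations: with θ = p/ρ, γ = (1−v²)^{−1/2}, h = 1 + θ + e(θ), ∂_t(ργ) + ∂_x(ργv) = 0, ∂_t(ρhγ²v) + ∂_x(ρhγ²v² + p) = 0, and ∂_t(ρhγ² − p) + ∂_x(ρhγ²v) = 0 on ℝ × (0,T). Then for every differentiable function 𝓗 : ℝ → ℝ, the additional conservation law ∂_t(ργ·𝓗(S)) + ∂_x(ργv·𝓗(S)) = 0 holds on ℝ × (0,T), where S = −ln ρ + Z(θ) is the specific entropy. -/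

import Mathlib

noncomputable section

/-- `Z(θ) = ∫₁^θ e'(ξ)/ξ dξ`. -/
def Zfun (e : ℝ → ℝ) (θ : ℝ) : ℝ := ∫ ξ in (1:ℝ)..θ, deriv e ξ / ξ

/-- Specific enthalpy `h(θ) = 1 + θ + e(θ)`. -/
def hfun (e : ℝ → ℝ) (θ : ℝ) : ℝ := 1 + θ + e θ

/-- Lorentz factor `γ = (1 − v²)^{−1/2}` for a scalar velocity. -/
def gam1 (v : ℝ) : ℝ := 1 / Real.sqrt (1 - v ^ 2)

lemma hasDerivAt_gam1 {b : ℝ} (hb : b ^ 2 < 1) :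
    HasDerivAt gam1 (b * gam1 b ^ 3) b := by
  have h1 : 0 < 1 - b ^ 2 := by linarith
  have hs : 0 < Real.sqrt (1 - b ^ 2) := Real.sqrt_pos.2 h1
  have h2 : HasDerivAt (fun x : ℝ => 1 - x ^ 2) (-(2 * b)) b := by
    simpa using ((hasDerivAt_pow 2 b).const_sub 1)
  have hf : HasDerivAt (fun x : ℝ => Real.sqrt (1 - x ^ 2))
      (1 / (2 * Real.sqrt (1 - b ^ 2)) * (-(2 * b))) b :=
    (Real.hasDerivAt_sqrt h1.ne').comp b h2
  have hg : HasDerivAt (fun x : ℝ => 1 / Real.sqrt (1 - x ^ 2))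
      (-(1 / (2 * Real.sqrt (1 - b ^ 2)) * (-(2 * b))) / (Real.sqrt (1 - b ^ 2)) ^ 2) b := by
    simpa [one_div] using hf.fun_inv hs.ne'
  have : (-(1 / (2 * Real.sqrt (1 - b ^ 2)) * (-(2 * b))) / (Real.sqrt (1 - b ^ 2)) ^ 2)
      = b * gam1 b ^ 3 := by
    have hsq : Real.sqrt (1 - b ^ 2) ^ 2 = 1 - b ^ 2 := Real.sq_sqrt h1.le
    rw [gam1]
    field_simp
  rw [this] at hg
  exact hg.congr_of_eventuallyEq (by filter_upwards with y; rw [gam1])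

lemma hasDerivAt_Zfun {e : ℝ → ℝ} (heC1 : ContDiffOn ℝ 1 e (Set.Ioi (0 : ℝ)))
    {θ : ℝ} (hθ : 0 < θ) :
    HasDerivAt (Zfun e) (deriv e θ / θ) θ := by
  have hcont : ContinuousOn (fun ξ => deriv e ξ / ξ) (Set.Ioi (0:ℝ)) := by
    exact (heC1.continuousOn_deriv_of_isOpen isOpen_Ioi le_rfl).div continuous_id.continuousOn
      (fun x hx => ne_of_gt hx)
  have hsub : Set.uIcc (1:ℝ) θ ⊆ Set.Ioi 0 := by
    intro y hy
    rcases Set.mem_uIcc.1 hy with ⟨h1, _⟩ | ⟨h1, _⟩ <;> simp [Set.mem_Ioi] <;> linarith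
  have hint : IntervalIntegrable (fun ξ => deriv e ξ / ξ) MeasureTheory.volume 1 θ :=
    (hcont.mono hsub).intervalIntegrable
  have hmeas : StronglyMeasurableAtFilter (fun ξ => deriv e ξ / ξ) (nhds θ)
      MeasureTheory.volume :=
    hcont.stronglyMeasurableAtFilter isOpen_Ioi θ hθ
  exact intervalIntegral.integral_hasDerivAt_right hint hmeas
    (hcont.continuousAt (isOpen_Ioi.mem_nhds hθ))

lemma slice_hasDerivAt {T : ℝ} {f : ℝ → ℝ → ℝ}
    (hf : ContDiffOn ℝ 1 (fun q : ℝ × ℝ => f q.1 q.2) (Set.univ ×ˢ Set.Ioo 0 T))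
    {x t : ℝ} (ht : t ∈ Set.Ioo (0:ℝ) T) :
    HasDerivAt (fun s => f x s) (deriv (fun s => f x s) t) t ∧
    HasDerivAt (fun y => f y t) (deriv (fun y => f y t) x) x := by
  have hopen : IsOpen (Set.univ ×ˢ Set.Ioo (0:ℝ) T) := (isOpen_univ (X := ℝ)).prod (isOpen_Ioo (a := (0:ℝ)) (b := T))
  have hmem : (x, t) ∈ Set.univ ×ˢ Set.Ioo (0:ℝ) T := ⟨Set.mem_univ _, ht⟩
  have hF : DifferentiableAt ℝ (fun q : ℝ × ℝ => f q.1 q.2) (x, t) :=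
    (hf.differentiableOn one_ne_zero).differentiableAt (hopen.mem_nhds hmem)
  constructor
  · exact ((hF.comp t (((differentiableAt_const x).prodMk differentiableAt_id))) :
      DifferentiableAt ℝ (fun s => f x s) t).hasDerivAt
  · have hc := hF.comp x (((differentiableAt_id (𝕜 := ℝ) (x := x)).prodMk (differentiableAt_const t)))
    exact hc.hasDerivAt

lemma key_alg (A B Cc U E0 E1 rt rx vt vx pt px : ℝ)
    (hA : A * A⁻¹ = 1) (hC : Cc * Cc⁻¹ = 1) (hAA : A⁻¹⁻¹ = A)
    (hU : U ^ 2 - B ^ 2 * U ^ 2 = 1)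
    (hM : rt * U + A * B * U ^ 3 * vt + rx * U * B + A * B ^ 2 * U ^ 3 * vx + A * U * vx = 0)
    (hMom : (rt * (1 + Cc / A + E0) + A * (1 + E1) * ((pt * A - Cc * rt) / A ^ 2)) * U ^ 2 * B
        + 2 * A * (1 + Cc / A + E0) * B ^ 2 * U ^ 4 * vt + A * (1 + Cc / A + E0) * U ^ 2 * vt
        + (rx * (1 + Cc / A + E0) + A * (1 + E1) * ((px * A - Cc * rx) / A ^ 2)) * U ^ 2 * B ^ 2
        + 2 * A * (1 + Cc / A + E0) * B ^ 3 * U ^ 4 * vx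
        + 2 * A * (1 + Cc / A + E0) * U ^ 2 * B * vx + px = 0)
    (hE : (rt * (1 + Cc / A + E0) + A * (1 + E1) * ((pt * A - Cc * rt) / A ^ 2)) * U ^ 2
        + 2 * A * (1 + Cc / A + E0) * B * U ^ 4 * vt - pt
        + (rx * (1 + Cc / A + E0) + A * (1 + E1) * ((px * A - Cc * rx) / A ^ 2)) * U ^ 2 * B
        + 2 * A * (1 + Cc / A + E0) * B ^ 2 * U ^ 4 * vx + A * (1 + Cc / A + E0) * U ^ 2 * vx = 0) :
    -(rt / A) + E1 / (Cc / A) * ((pt * A - Cc * rt) / A ^ 2)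
      + B * (-(rx / A) + E1 / (Cc / A) * ((px * A - Cc * rx) / A ^ 2)) = 0 := by
  linear_combination (-(Cc⁻¹ * (1 + Cc / A + E0) * U * (1 - B ^ 2))) * hM
    + (-(Cc⁻¹ * B)) * hMom + Cc⁻¹ * hE
    + (Cc⁻¹*E1*pt + (-1)*Cc⁻¹*U^2*pt + (-1)*Cc⁻¹*U^2*E1*pt + B*Cc⁻¹*E1*px + (-1)*B*Cc⁻¹*U^2*px + (-1)*B*Cc⁻¹*U^2*E1*px + B*Cc*Cc⁻¹*U^2*vt + (-1)*B*Cc*Cc⁻¹*U^4*vt + B^2*Cc⁻¹*U^2*pt + B^2*Cc⁻¹*U^2*E1*pt + B^2*Cc*Cc⁻¹*U^2*vx + (-1)*B^2*Cc*Cc⁻¹*U^4*vx + B^3*Cc⁻¹*U^2*px + B^3*Cc⁻¹*U^2*E1*px + B^3*Cc*Cc⁻¹*U^4*vt + B^4*Cc*Cc⁻¹*U^4*vx + (-1)*A⁻¹*Cc*Cc⁻¹*E1*rt + A⁻¹*Cc*Cc⁻¹*U^2*rt + A⁻¹*Cc*Cc⁻¹*U^2*E1*rt + (-1)*A⁻¹*B*Cc*Cc⁻¹*E1*rx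 + A⁻¹*B*Cc*Cc⁻¹*U^2*rx + A⁻¹*B*Cc*Cc⁻¹*U^2*E1*rx + (-1)*A⁻¹*B^2*Cc*Cc⁻¹*U^2*rt + (-1)*A⁻¹*B^2*Cc*Cc⁻¹*U^2*E1*rt + (-1)*A⁻¹*B^3*Cc*Cc⁻¹*U^2*rx + (-1)*A⁻¹*B^3*Cc*Cc⁻¹*U^2*E1*rx + A*A⁻¹*Cc⁻¹*E1*pt + (-1)*A*A⁻¹*Cc⁻¹*U^2*pt + (-1)*A*A⁻¹*Cc⁻¹*U^2*E1*pt + A*A⁻¹*B*Cc⁻¹*E1*px + (-1)*A*A⁻¹*B*Cc⁻¹*U^2*px + (-1)*A*A⁻¹*B*Cc⁻¹*U^2*E1*px + A*A⁻¹*B^2*Cc⁻¹*U^2*pt + A*A⁻¹*B^2*Cc⁻¹*U^2*E1*pt + A*A⁻¹*B^3*Cc⁻¹*U^2*px + A*A⁻¹*B^3*Cc⁻¹*U^2*E1*px) * hA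
    + (B*U^2*vt + (-1)*B*U^4*vt + B^2*U^2*vx + (-1)*B^2*U^4*vx + B^3*U^4*vt + B^4*U^4*vx + (-1)*A⁻¹*E1*rt + A⁻¹*U^2*rt + A⁻¹*U^2*E1*rt + (-1)*A⁻¹*B*E1*rx + A⁻¹*B*U^2*rx + A⁻¹*B*U^2*E1*rx + (-1)*A⁻¹*B^2*U^2*rt + (-1)*A⁻¹*B^2*U^2*E1*rt + (-1)*A⁻¹*B^3*U^2*rx + (-1)*A⁻¹*B^3*U^2*E1*rx) * hC
    + ((-1)*Cc⁻¹*pt + (-1)*Cc⁻¹*E1*pt + (-1)*B*U^2*vt + (-1)*B*Cc⁻¹*px + (-1)*B*Cc⁻¹*E1*px + (-1)*B^2*U^2*vx + A⁻¹*rt + A⁻¹*E1*rt + A⁻¹*B*rx + A⁻¹*B*E1*rx + (-1)*A*B*Cc⁻¹*U^2*vt + (-1)*A*B*Cc⁻¹*U^2*E0*vt + (-1)*A*B^2*Cc⁻¹*U^2*vx + (-1)*A*B^2*Cc⁻¹*U^2*E0*vx) * hU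
    + ((-1)*A⁻¹^2*Cc*Cc⁻¹*E1*rt + (-1)*A⁻¹^2*B*Cc*Cc⁻¹*E1*rx + A*A⁻¹^2*Cc⁻¹*E1*pt + A*A⁻¹^2*B*Cc⁻¹*E1*px) * hAA

/-- For continuously differentiable solutions of the 1D relativistic
Euler equations with a continuously differentiable Synge-type EOS, for every
differentiable `𝓗 : ℝ → ℝ` the additional conservation law
`∂_t(ργ 𝓗(S)) + ∂_x(ργv 𝓗(S)) = 0` holds, where `S = −ln ρ + Z(θ)`, `θ = p/ρ`. -/
theorem minimum_entropy_stmt19 (e : ℝ → ℝ)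
    (heC1 : ContDiffOn ℝ 1 e (Set.Ioi (0 : ℝ)))
    (hpos : ∀ ξ : ℝ, 0 < ξ → 0 < e ξ)
    (hineq : ∀ ξ : ℝ, 0 < ξ → ξ / (e ξ + 1) < deriv e ξ)
    (T : ℝ) (hT : 0 < T)
    (ρ v p : ℝ → ℝ → ℝ)
    (hρC1 : ContDiffOn ℝ 1 (fun q : ℝ × ℝ => ρ q.1 q.2) (Set.univ ×ˢ Set.Ioo 0 T))
    (hvC1 : ContDiffOn ℝ 1 (fun q : ℝ × ℝ => v q.1 q.2) (Set.univ ×ˢ Set.Ioo 0 T))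
    (hpC1 : ContDiffOn ℝ 1 (fun q : ℝ × ℝ => p q.1 q.2) (Set.univ ×ˢ Set.Ioo 0 T))
    (hadm : ∀ x : ℝ, ∀ t ∈ Set.Ioo (0 : ℝ) T,
      0 < ρ x t ∧ 0 < p x t ∧ |v x t| < 1)
    (heuler_mass : ∀ x : ℝ, ∀ t ∈ Set.Ioo (0 : ℝ) T,
      deriv (fun s => ρ x s * gam1 (v x s)) t
        + deriv (fun y => ρ y t * gam1 (v y t) * v y t) x = 0)
    (heuler_mom : ∀ x : ℝ, ∀ t ∈ Set.Ioo (0 : ℝ) T,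
      deriv (fun s => ρ x s * hfun e (p x s / ρ x s) * gam1 (v x s) ^ 2 * v x s) t
        + deriv (fun y => ρ y t * hfun e (p y t / ρ y t) * gam1 (v y t) ^ 2 * (v y t) ^ 2
            + p y t) x = 0)
    (heuler_energy : ∀ x : ℝ, ∀ t ∈ Set.Ioo (0 : ℝ) T,
      deriv (fun s => ρ x s * hfun e (p x s / ρ x s) * gam1 (v x s) ^ 2 - p x s) t
        + deriv (fun y => ρ y t * hfun e (p y t / ρ y t) * gam1 (v y t) ^ 2 * v y t) x
          = 0) :
    ∀ H : ℝ → ℝ, Differentiable ℝ H →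
      ∀ x : ℝ, ∀ t ∈ Set.Ioo (0 : ℝ) T,
        deriv (fun s => ρ x s * gam1 (v x s) *
            H (-Real.log (ρ x s) + Zfun e (p x s / ρ x s))) t
          + deriv (fun y => ρ y t * gam1 (v y t) * v y t *
              H (-Real.log (ρ y t) + Zfun e (p y t / ρ y t))) x = 0 := by
  intro H hH x t ht
  obtain ⟨ha, hc, hbv⟩ := hadm x t ht
  have hb2 : (v x t) ^ 2 < 1 := by
    have h := abs_lt.1 hbv
    nlinarith [h.1, h.2]
  have h1b : 0 < 1 - (v x t) ^ 2 := by linarith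
  have hθ : 0 < p x t / ρ x t := div_pos hc ha
  obtain ⟨Rt, Rx⟩ := slice_hasDerivAt hρC1 ht
  obtain ⟨Vt, Vx⟩ := slice_hasDerivAt hvC1 ht
  obtain ⟨Pt, Px⟩ := slice_hasDerivAt hpC1 ht
  set rt := deriv (fun s => ρ x s) t with hrtdef
  set vt := deriv (fun s => v x s) t with hvtdef
  set pt := deriv (fun s => p x s) t with hptdef
  set rx := deriv (fun y => ρ y t) x with hrxdef
  set vx := deriv (fun y => v y t) x with hvxdef
  set px := deriv (fun y => p y t) x with hpxdef
  have He : HasDerivAt e (deriv e (p x t / (ρ x t))) (p x t / (ρ x t)) :=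
    ((heC1.differentiableOn one_ne_zero).differentiableAt
      (isOpen_Ioi.mem_nhds (Set.mem_Ioi.2 hθ))).hasDerivAt
  have Hh : HasDerivAt (hfun e) (1 + deriv e (p x t / (ρ x t))) (p x t / (ρ x t)) :=
    ((hasDerivAt_id (p x t / (ρ x t))).const_add 1).add He
  have Ze : HasDerivAt (Zfun e) (deriv e (p x t / (ρ x t)) / (p x t / (ρ x t))) (p x t / (ρ x t)) :=
    hasDerivAt_Zfun heC1 hθ
  have Tt : HasDerivAt (fun s => p x s / ρ x s) ((pt * (ρ x t) - (p x t) * rt) / (ρ x t) ^ 2) t := Pt.fun_div Rt ha.ne'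
  have Tx : HasDerivAt (fun y => p y t / ρ y t) ((px * (ρ x t) - (p x t) * rx) / (ρ x t) ^ 2) x := Px.fun_div Rx ha.ne'
  have Gt : HasDerivAt (fun s => gam1 (v x s)) ((v x t) * gam1 (v x t) ^ 3 * vt) t :=
    (hasDerivAt_gam1 hb2).comp t Vt
  have Gx : HasDerivAt (fun y => gam1 (v y t)) ((v x t) * gam1 (v x t) ^ 3 * vx) x :=
    by have hc := (hasDerivAt_gam1 hb2).comp x Vx; exact hc
  have Hft : HasDerivAt (fun s => hfun e (p x s / ρ x s)) ((1 + deriv e (p x t / (ρ x t))) * ((pt * (ρ x t) - (p x t) * rt) / (ρ x t) ^ 2)) t :=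
    by have hc := Hh.comp t Tt; exact hc
  have Hfx : HasDerivAt (fun y => hfun e (p y t / ρ y t)) ((1 + deriv e (p x t / (ρ x t))) * ((px * (ρ x t) - (p x t) * rx) / (ρ x t) ^ 2)) x :=
    by have hc := Hh.comp x Tx; exact hc
  have Zt : HasDerivAt (fun s => Zfun e (p x s / ρ x s)) (deriv e (p x t / (ρ x t)) / (p x t / (ρ x t)) * ((pt * (ρ x t) - (p x t) * rt) / (ρ x t) ^ 2)) t :=
    by have hc := Ze.comp t Tt; exact hc
  have Zx : HasDerivAt (fun y => Zfun e (p y t / ρ y t)) (deriv e (p x t / (ρ x t)) / (p x t / (ρ x t)) * ((px * (ρ x t) - (p x t) * rx) / (ρ x t) ^ 2)) x :=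
    by have hc := Ze.comp x Tx; exact hc
  have St : HasDerivAt (fun s => -Real.log (ρ x s) + Zfun e (p x s / ρ x s))
      (-(rt / (ρ x t)) + deriv e (p x t / (ρ x t)) / (p x t / (ρ x t)) * ((pt * (ρ x t) - (p x t) * rt) / (ρ x t) ^ 2)) t := ((Rt.log ha.ne').fun_neg).fun_add Zt
  have Sx : HasDerivAt (fun y => -Real.log (ρ y t) + Zfun e (p y t / ρ y t))
      (-(rx / (ρ x t)) + deriv e (p x t / (ρ x t)) / (p x t / (ρ x t)) * ((px * (ρ x t) - (p x t) * rx) / (ρ x t) ^ 2)) x := ((Rx.log ha.ne').fun_neg).fun_add Zx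
  have hHd : HasDerivAt H (deriv H (-Real.log (ρ x t) + Zfun e (p x t / (ρ x t)))) (-Real.log (ρ x t) + Zfun e (p x t / (ρ x t))) := (hH _).hasDerivAt
  have HSt : HasDerivAt (fun s => H (-Real.log (ρ x s) + Zfun e (p x s / ρ x s)))
      ((deriv H (-Real.log (ρ x t) + Zfun e (p x t / (ρ x t)))) * (-(rt / (ρ x t)) + deriv e (p x t / (ρ x t)) / (p x t / (ρ x t)) * ((pt * (ρ x t) - (p x t) * rt) / (ρ x t) ^ 2))) t := hHd.comp t St
  have HSx : HasDerivAt (fun y => H (-Real.log (ρ y t) + Zfun e (p y t / ρ y t)))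
      ((deriv H (-Real.log (ρ x t) + Zfun e (p x t / (ρ x t)))) * (-(rx / (ρ x t)) + deriv e (p x t / (ρ x t)) / (p x t / (ρ x t)) * ((px * (ρ x t) - (p x t) * rx) / (ρ x t) ^ 2))) x := hHd.comp x Sx
  -- rewrite the mass equation
  have hmt : deriv (fun s => ρ x s * gam1 (v x s)) t = rt * gam1 (v x t) + (ρ x t) * (v x t) * gam1 (v x t) ^ 3 * vt :=
    (Rt.fun_mul Gt).deriv.trans (by push_cast; ring)
  have hmx : deriv (fun y => ρ y t * gam1 (v y t) * v y t) x = rx * gam1 (v x t) * (v x t) + (ρ x t) * (v x t) ^ 2 * gam1 (v x t) ^ 3 * vx + (ρ x t) * gam1 (v x t) * vx :=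
    ((Rx.fun_mul Gx).fun_mul Vx).deriv.trans (by push_cast; ring)
  have E1m := heuler_mass x t ht
  rw [hmt, hmx] at E1m
  -- rewrite the momentum equation
  have hmomt : deriv (fun s => ρ x s * hfun e (p x s / ρ x s) * gam1 (v x s) ^ 2 * v x s) t
      = (rt * (1 + p x t / (ρ x t) + e (p x t / (ρ x t))) + (ρ x t) * (1 + deriv e (p x t / (ρ x t))) * ((pt * (ρ x t) - (p x t) * rt) / (ρ x t) ^ 2)) * gam1 (v x t) ^ 2 * (v x t) + 2 * (ρ x t) * (1 + p x t / (ρ x t) + e (p x t / (ρ x t))) * (v x t) ^ 2 * gam1 (v x t) ^ 4 * vt + (ρ x t) * (1 + p x t / (ρ x t) + e (p x t / (ρ x t))) * gam1 (v x t) ^ 2 * vt :=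
    (((Rt.fun_mul Hft).fun_mul (Gt.fun_pow 2)).fun_mul Vt).deriv.trans
      (by simp only [hfun]; push_cast; ring)
  have hmomx : deriv (fun y => ρ y t * hfun e (p y t / ρ y t) * gam1 (v y t) ^ 2
        * (v y t) ^ 2 + p y t) x = (rx * (1 + p x t / (ρ x t) + e (p x t / (ρ x t))) + (ρ x t) * (1 + deriv e (p x t / (ρ x t))) * ((px * (ρ x t) - (p x t) * rx) / (ρ x t) ^ 2)) * gam1 (v x t) ^ 2 * (v x t) ^ 2 + 2 * (ρ x t) * (1 + p x t / (ρ x t) + e (p x t / (ρ x t))) * (v x t) ^ 3 * gam1 (v x t) ^ 4 * vx + 2 * (ρ x t) * (1 + p x t / (ρ x t) + e (p x t / (ρ x t))) * gam1 (v x t) ^ 2 * (v x t) * vx + px :=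
    ((((Rx.fun_mul Hfx).fun_mul (Gx.fun_pow 2)).fun_mul (Vx.fun_pow 2)).fun_add Px).deriv.trans
      (by simp only [hfun]; push_cast; ring)
  have E2m := heuler_mom x t ht
  rw [hmomt, hmomx] at E2m
  -- rewrite the energy equation
  have het : deriv (fun s => ρ x s * hfun e (p x s / ρ x s) * gam1 (v x s) ^ 2 - p x s) t
      = (rt * (1 + p x t / (ρ x t) + e (p x t / (ρ x t))) + (ρ x t) * (1 + deriv e (p x t / (ρ x t))) * ((pt * (ρ x t) - (p x t) * rt) / (ρ x t) ^ 2)) * gam1 (v x t) ^ 2 + 2 * (ρ x t) * (1 + p x t / (ρ x t) + e (p x t / (ρ x t))) * (v x t) * gam1 (v x t) ^ 4 * vt - pt :=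
    (((Rt.fun_mul Hft).fun_mul (Gt.fun_pow 2)).fun_sub Pt).deriv.trans
      (by simp only [hfun]; push_cast; ring)
  have hex : deriv (fun y => ρ y t * hfun e (p y t / ρ y t) * gam1 (v y t) ^ 2 * v y t) x
      = (rx * (1 + p x t / (ρ x t) + e (p x t / (ρ x t))) + (ρ x t) * (1 + deriv e (p x t / (ρ x t))) * ((px * (ρ x t) - (p x t) * rx) / (ρ x t) ^ 2)) * gam1 (v x t) ^ 2 * (v x t) + 2 * (ρ x t) * (1 + p x t / (ρ x t) + e (p x t / (ρ x t))) * (v x t) ^ 2 * gam1 (v x t) ^ 4 * vx + (ρ x t) * (1 + p x t / (ρ x t) + e (p x t / (ρ x t))) * gam1 (v x t) ^ 2 * vx :=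
    (((Rx.fun_mul Hfx).fun_mul (Gx.fun_pow 2)).fun_mul Vx).deriv.trans
      (by simp only [hfun]; push_cast; ring)
  have E3m := heuler_energy x t ht
  rw [het, hex] at E3m
  -- algebraic facts
  have hs2 : Real.sqrt (1 - (v x t) ^ 2) ^ 2 = 1 - (v x t) ^ 2 := Real.sq_sqrt h1b.le
  have hU : gam1 (v x t) ^ 2 - (v x t) ^ 2 * gam1 (v x t) ^ 2 = 1 := by
    rw [gam1, div_pow, one_pow, hs2]
    field_simp
  -- the entropy transport identity
  have key : -(rt / (ρ x t)) + deriv e (p x t / (ρ x t)) / ((p x t) / (ρ x t)) * ((pt * (ρ x t) - (p x t) * rt) / (ρ x t) ^ 2)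
      + (v x t) * (-(rx / (ρ x t)) + deriv e (p x t / (ρ x t)) / ((p x t) / (ρ x t)) * ((px * (ρ x t) - (p x t) * rx) / (ρ x t) ^ 2)) = 0 := by
    refine key_alg (ρ x t) (v x t) (p x t) (gam1 (v x t)) (e (p x t / (ρ x t))) (deriv e (p x t / (ρ x t))) rt rx vt vx pt px
      (mul_inv_cancel₀ ha.ne') (mul_inv_cancel₀ hc.ne') (inv_inv _) hU
      (by linear_combination E1m) (by linear_combination E2m) (by linear_combination E3m)
  -- expand the goal derivatives
  have hg1 : deriv (fun s => ρ x s * gam1 (v x s) *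
      H (-Real.log (ρ x s) + Zfun e (p x s / ρ x s))) t = (rt * gam1 (v x t) + (ρ x t) * (v x t) * gam1 (v x t) ^ 3 * vt) * (H (-Real.log (ρ x t) + Zfun e (p x t / (ρ x t)))) + (ρ x t) * gam1 (v x t) * (deriv H (-Real.log (ρ x t) + Zfun e (p x t / (ρ x t)))) * (-(rt / (ρ x t)) + deriv e (p x t / (ρ x t)) / ((p x t) / (ρ x t)) * ((pt * (ρ x t) - (p x t) * rt) / (ρ x t) ^ 2)) :=
    ((Rt.fun_mul Gt).fun_mul HSt).deriv.trans (by push_cast; ring)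
  have hg2 : deriv (fun y => ρ y t * gam1 (v y t) * v y t *
      H (-Real.log (ρ y t) + Zfun e (p y t / ρ y t))) x = ((rx * gam1 (v x t) + (ρ x t) * (v x t) * gam1 (v x t) ^ 3 * vx) * (v x t) + (ρ x t) * gam1 (v x t) * vx) * (H (-Real.log (ρ x t) + Zfun e (p x t / (ρ x t)))) + (ρ x t) * gam1 (v x t) * (v x t) * (deriv H (-Real.log (ρ x t) + Zfun e (p x t / (ρ x t)))) * (-(rx / (ρ x t)) + deriv e (p x t / (ρ x t)) / ((p x t) / (ρ x t)) * ((px * (ρ x t) - (p x t) * rx) / (ρ x t) ^ 2)) :=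
    (((Rx.fun_mul Gx).fun_mul Vx).fun_mul HSx).deriv.trans (by push_cast; ring)
  rw [hg1, hg2]
  linear_combination (H (-Real.log (ρ x t) + Zfun e (p x t / (ρ x t)))) * E1m + ((ρ x t) * gam1 (v x t) * (deriv H (-Real.log (ρ x t) + Zfun e (p x t / (ρ x t))))) * key
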